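/- arXiv:1901.10982 — 2 statements merged into one kernel-verified Lean document; each statement's English description precedes it below -/
import Mathlib

section
/- Let X be a finite set with |X| = n ≥ 2, K a natural number with 1 ≤ K < n, α : X → ℝ with α(i) < 0 for every i, β a symmetric function assigning to each unordered pair {i,j} of distinct elements of X a value β(i,j) > 0, and B a real number. Define the QUBO objective of a subset S ⊆ X by O(S) = Σ_{i ∈ S} (α(i) − B·K + B/2) + Σ_{{i,j} ⊆ S, i ≠ j} (β(i,j) + B). If B > 2·max_{i ∈ X} |α(i)|, then for every S ⊆ X with |S| = K + l for some l ≥ 1 and every S' ⊆ S with |S'| = K, it holds that O(S') < O(S). -/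
/-!
Write `S = S' ∪ T` with `T = S \ S'`, so `|T| = l` and `|S'| = K`. Passing from `S'` to `S` adds
the `l` node values of `T`, each above `-B·K` because `|α i| < B/2`, together with at least the
`l·K` edges joining `T` to `S'`, each worth at least `B`. The net change exceeds
`-l·B·K + l·K·B = 0`.
-/

/-- The QUBO objective of a selection `S`: each selected node `i` contributes
`α i − B·K + B/2` and each unordered pair `{i,j} ⊆ S` of distinct selected nodes
contributes `β i j + B`. -/
noncomputable def quboObj {ι : Type*} [LinearOrder ι] (α : ι → ℝ) (β : ι → ι → ℝ)
    (B K : ℝ) (S : Finset ι) : ℝ :=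
  (∑ i ∈ S, (α i - B * K + B / 2)) +
    ∑ p ∈ S.offDiag.filter (fun p => p.1 < p.2), (β p.1 p.2 + B)

open Finset

namespace Finset

variable {ι : Type*} [LinearOrder ι]

def ltPairs (S : Finset ι) : Finset (ι × ι) :=
  S.offDiag.filter (fun p => p.1 < p.2)

theorem mem_ltPairs {S : Finset ι} {p : ι × ι} :
    p ∈ S.ltPairs ↔ p.1 ∈ S ∧ p.2 ∈ S ∧ p.1 < p.2 := by
  simp only [ltPairs, mem_filter, mem_offDiag]
  exact ⟨fun ⟨⟨h₁, h₂, _⟩, h⟩ => ⟨h₁, h₂, h⟩, fun ⟨h₁, h₂, h⟩ => ⟨⟨h₁, h₂, h.ne⟩, h⟩⟩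

theorem ltPairs_mono {A S : Finset ι} (h : A ⊆ S) : A.ltPairs ⊆ S.ltPairs := fun _ hp =>
  let ⟨h₁, h₂, h₃⟩ := mem_ltPairs.1 hp
  mem_ltPairs.2 ⟨h h₁, h h₂, h₃⟩

/-- `t` is recovered from the sorted pair as its entry outside `A`. -/
theorem ite_min_mem_eq_of_notMem_of_mem {A : Finset ι} {t a : ι} (ht : t ∉ A) (ha : a ∈ A) :
    (if min t a ∈ A then (max t a, min t a) else (min t a, max t a)) = (t, a) := by
  rcases le_total t a with hle | hle
  · simp [min_eq_left hle, max_eq_right hle, ht]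
  · simp [min_eq_right hle, max_eq_left hle, ha]

theorem sort_pair_mem_ltPairs_sdiff {A S : Finset ι} (h : A ⊆ S) {t a : ι} (ht : t ∈ S \ A)
    (ha : a ∈ A) : (min t a, max t a) ∈ S.ltPairs \ A.ltPairs := by
  obtain ⟨htS, htA⟩ := mem_sdiff.1 ht
  have hta : t ≠ a := fun e => htA (e ▸ ha)
  rw [mem_sdiff, mem_ltPairs, mem_ltPairs]
  rcases le_total t a with hle | hle
  · simp only [min_eq_left hle, max_eq_right hle]
    exact ⟨⟨htS, h ha, lt_of_le_of_ne hle hta⟩, fun h' => htA h'.1⟩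
  · simp only [min_eq_right hle, max_eq_left hle]
    exact ⟨⟨h ha, htS, lt_of_le_of_ne hle hta.symm⟩, fun h' => htA h'.2.1⟩

/-- Every element of `S \ A` is joined to every element of `A` by a pair of `S` not inside `A`. -/
theorem card_sdiff_mul_card_le_card_ltPairs_sdiff {A S : Finset ι} (h : A ⊆ S) :
    #(S \ A) * #A ≤ #(S.ltPairs \ A.ltPairs) := by
  rw [← card_product]
  refine card_le_card_of_injOn (fun p => (min p.1 p.2, max p.1 p.2)) ?_ ?_
  · rintro ⟨t, a⟩ hp
    obtain ⟨ht, ha⟩ := mem_product.1 hp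
    exact sort_pair_mem_ltPairs_sdiff h ht ha
  · rintro ⟨t, a⟩ hp ⟨t', a'⟩ hp' e
    obtain ⟨ht, ha⟩ := mem_product.1 hp
    obtain ⟨ht', ha'⟩ := mem_product.1 hp'
    rw [← ite_min_mem_eq_of_notMem_of_mem (mem_sdiff.1 ht).2 ha,
      ← ite_min_mem_eq_of_notMem_of_mem (mem_sdiff.1 ht').2 ha']
    simp only [Prod.mk.injEq] at e
    rw [e.1, e.2]

end Finset

theorem neg_half_lt_of_two_mul_sup'_abs_lt {ι : Type*} {X : Finset ι} (hX : X.Nonempty)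
    {f : ι → ℝ} {B : ℝ} (hB : 2 * X.sup' hX (fun i => |f i|) < B) {i : ι} (hi : i ∈ X) :
    -(B / 2) < f i := by
  have := le_sup' (fun i => |f i|) hi
  linarith [neg_abs_le (f i)]

theorem quboObj_eq_sum_ltPairs {ι : Type*} [LinearOrder ι] (α : ι → ℝ) (β : ι → ι → ℝ) (B K : ℝ)
    (S : Finset ι) :
    quboObj α β B K S = ∑ i ∈ S, (α i - B * K + B / 2) + ∑ p ∈ S.ltPairs, (β p.1 p.2 + B) :=
  rfl

theorem qubo_too_many_nodes_general {ι : Type*} [LinearOrder ι] (X : Finset ι)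
    (hX : X.Nonempty) (K : ℕ) (α : ι → ℝ) (β : ι → ι → ℝ)
    (hβpos : ∀ i ∈ X, ∀ j ∈ X, i ≠ j → 0 < β i j)
    (B : ℝ) (hB : B > 2 * X.sup' hX (fun i => |α i|)) :
    ∀ S ⊆ X, ∀ l : ℕ, 1 ≤ l → S.card = K + l →
      ∀ S' ⊆ S, S'.card = K →
        quboObj α β B (K : ℝ) S' < quboObj α β B (K : ℝ) S := by
  intro S hSX l hl hScard S' hS'S hS'card
  have hB0 : 0 ≤ B := by
    obtain ⟨i, hi⟩ := hX
    linarith [abs_nonneg (α i), le_sup' (fun i => |α i|) hi]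
  have hT : #(S \ S') = l := by rw [card_sdiff_of_subset hS'S]; omega
  have hnodes : -(l * K * B : ℝ) < ∑ i ∈ S \ S', (α i - B * K + B / 2) := calc
    -(l * K * B : ℝ) = ∑ _i ∈ S \ S', -(B * K) := by rw [sum_const, hT, nsmul_eq_mul]; ring
    _ < _ := sum_lt_sum_of_nonempty (card_pos.1 (by omega)) fun i hi => by
      linarith [neg_half_lt_of_two_mul_sup'_abs_lt hX hB (hSX (sdiff_subset hi))]
  have hedges : (l * K : ℝ) * B ≤ ∑ p ∈ S.ltPairs \ S'.ltPairs, (β p.1 p.2 + B) := calc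
    (l * K : ℝ) * B ≤ #(S.ltPairs \ S'.ltPairs) * B := by
      gcongr
      exact_mod_cast hT ▸ hS'card ▸ card_sdiff_mul_card_le_card_ltPairs_sdiff hS'S
    _ ≤ _ := by
      rw [← nsmul_eq_mul]
      refine card_nsmul_le_sum _ _ _ fun p hp => ?_
      obtain ⟨h₁, h₂, h₃⟩ := mem_ltPairs.1 (mem_sdiff.1 hp).1
      linarith [hβpos _ (hSX h₁) _ (hSX h₂) h₃.ne]
  rw [quboObj_eq_sum_ltPairs, quboObj_eq_sum_ltPairs, ← sum_sdiff hS'S,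
    ← sum_sdiff (ltPairs_mono hS'S)]
  linarith

/-- 'Too many nodes' half of the constraint-strength guarantee: if
`B > 2·max_{i ∈ X} |α(i)|`, then shrinking any selection of `K + l` nodes (`l ≥ 1`)
to any `K`-node subselection strictly decreases the QUBO objective. -/
theorem qubo_too_many_nodes {ι : Type*} [LinearOrder ι] (X : Finset ι)
    (hX : X.Nonempty) (n : ℕ) (hXcard : X.card = n) (hn : 2 ≤ n)
    (K : ℕ) (hK : 1 ≤ K) (hKn : K < n)
    (α : ι → ℝ) (hα : ∀ i ∈ X, α i < 0)
    (β : ι → ι → ℝ) (hβsymm : ∀ i j, β i j = β j i)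
    (hβpos : ∀ i ∈ X, ∀ j ∈ X, i ≠ j → 0 < β i j)
    (B : ℝ) (hB : B > 2 * X.sup' hX (fun i => |α i|)) :
    ∀ S ⊆ X, ∀ l : ℕ, 1 ≤ l → S.card = K + l →
      ∀ S' ⊆ S, S'.card = K →
        quboObj α β B (K : ℝ) S' < quboObj α β B (K : ℝ) S :=
  qubo_too_many_nodes_general X hX K α β hβpos B hB
end

section
/- Let X be a finite set with |X| = n ≥ 2, K a natural number with 1 ≤ K < n, α : X → ℝ with α(i) < 0 for every i, β a symmetric function assigning to each unordered pair {i,j} of distinct elements of X a value β(i,j) > 0, and B a real number. Define the QUBO objective of a subset S ⊆ X by O(S) = Σ_{i ∈ S} (α(i) − B·K + B/2) + Σ_{{i,j} ⊆ S, i ≠ j} (β(i,j) + B). If B > 2·K·max_{i ≠ j} β(i,j), then for every S ⊆ X with |S| = K − l for some 1 ≤ l ≤ K and every S' ⊆ X with S ⊆ S' and |S'| = K, it holds that O(S') < O(S). -/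
namespace Finset

variable {ι : Type*}

theorem filter_lt_offDiag_insert [LinearOrder ι] {T : Finset ι} {x : ι} (hx : x ∉ T) :
    (insert x T).offDiag.filter (fun p => p.1 < p.2) =
      T.offDiag.filter (fun p => p.1 < p.2) ∪ T.image (fun i => (min i x, max i x)) := by
  ext ⟨a, b⟩
  simp only [mem_filter, mem_offDiag, mem_insert, mem_union, mem_image, Prod.mk.injEq]
  grind

theorem sum_filter_lt_offDiag_insert [LinearOrder ι] {R : Type*} [AddCommMonoid R]
    (f : ι × ι → R) {T : Finset ι} {x : ι} (hx : x ∉ T) :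
    ∑ p ∈ (insert x T).offDiag.filter (fun p => p.1 < p.2), f p =
      ∑ p ∈ T.offDiag.filter (fun p => p.1 < p.2), f p + ∑ i ∈ T, f (min i x, max i x) := by
  rw [filter_lt_offDiag_insert hx, sum_union, sum_image]
  · intro i _ j _ h
    simp only [Prod.mk.injEq] at h
    grind
  · rw [disjoint_left]
    simp only [mem_filter, mem_offDiag, mem_image, not_exists, not_and]
    grind

theorem lt_of_ssubset_of_insert_lt {γ : Type*} [DecidableEq ι] [Preorder γ] {f : Finset ι → γ}
    {S U : Finset ι} (h : ∀ T ⊆ U, ∀ x ∈ U, x ∉ T → f (insert x T) < f T) (hSU : S ⊂ U) :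
    f U < f S := by
  obtain ⟨x, hxU, hxS⟩ := exists_of_ssubset hSU
  have hstep := h S hSU.subset x hxU hxS
  rcases (insert_subset hxU hSU.subset).eq_or_ssubset with hfull | hsmaller
  · rwa [hfull] at hstep
  · exact (lt_of_ssubset_of_insert_lt h hsmaller).trans hstep
termination_by #U - #S
decreasing_by
  have := card_lt_card hsmaller
  rw [card_insert_of_notMem hxS] at this ⊢
  omega

end Finset

section Qubo

variable {ι : Type*} [LinearOrder ι] (α : ι → ℝ) (β : ι → ι → ℝ) (B K : ℝ)

theorem quboObj_insert {T : Finset ι} {x : ι} (hx : x ∉ T) :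
    quboObj α β B K (insert x T) =
      quboObj α β B K T + (α x - B * K + B / 2) + ∑ i ∈ T, (β (min i x) (max i x) + B) := by
  unfold quboObj
  rw [Finset.sum_insert hx, Finset.sum_filter_lt_offDiag_insert (fun p => β p.1 p.2 + B) hx]
  ring

variable {α β B}

theorem quboObj_insert_lt {K : ℕ} {M : ℝ} {T : Finset ι} {x : ι} (hx : x ∉ T)
    (hTK : T.card < K) (hαx : α x < 0) (hβM : ∀ i ∈ T, β (min i x) (max i x) ≤ M)
    (hM : 0 ≤ M) (hB : 2 * K * M < B) :
    quboObj α β B K (insert x T) < quboObj α β B K T := by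
  have hTK' : (T.card : ℝ) ≤ K - 1 := by
    rw [le_sub_iff_add_le]; exact_mod_cast hTK
  have hMB : 0 ≤ M + B := by nlinarith
  have hpairs : ∑ i ∈ T, (β (min i x) (max i x) + B) ≤ (K - 1) * (M + B) :=
    calc ∑ i ∈ T, (β (min i x) (max i x) + B) ≤ ∑ _i ∈ T, (M + B) :=
          Finset.sum_le_sum fun i hi => by linarith [hβM i hi]
      _ = T.card * (M + B) := by rw [Finset.sum_const, nsmul_eq_mul]
      _ ≤ (K - 1) * (M + B) := mul_le_mul_of_nonneg_right hTK' hMB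
  rw [quboObj_insert α β B K hx]
  nlinarith

end Qubo

theorem qubo_too_few_nodes_general {ι : Type*} [LinearOrder ι] (X : Finset ι)
    (K : ℕ)
    (α : ι → ℝ) (hα : ∀ i ∈ X, α i < 0)
    (β : ι → ι → ℝ)
    (hβpos : ∀ i ∈ X, ∀ j ∈ X, i ≠ j → 0 < β i j)
    (hXoff : X.offDiag.Nonempty)
    (B : ℝ) (hB : B > 2 * (K : ℝ) * X.offDiag.sup' hXoff (fun p => β p.1 p.2)) :
    ∀ S ⊆ X, ∀ l : ℕ, 1 ≤ l → l ≤ K → S.card = K - l →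
      ∀ S', S ⊆ S' → S' ⊆ X → S'.card = K →
        quboObj α β B (K : ℝ) S' < quboObj α β B (K : ℝ) S := by
  intro S _ l hl1 hlK hScard S' hSS' hS'X hS'card
  set M := X.offDiag.sup' hXoff (fun p => β p.1 p.2)
  have hβM : ∀ i ∈ X, ∀ j ∈ X, i ≠ j → β (min i j) (max i j) ≤ M := fun i hi j hj hij =>
    Finset.le_sup' (fun p => β p.1 p.2) (b := (min i j, max i j)) (Finset.mem_offDiag.2
      ⟨min_rec' (· ∈ X) hi hj, max_rec' (· ∈ X) hi hj, (min_lt_max.2 hij).ne⟩)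
  have hM : 0 ≤ M := by
    obtain ⟨⟨i, j⟩, hij⟩ := hXoff
    obtain ⟨hi, hj, hne⟩ := Finset.mem_offDiag.1 hij
    exact (hβpos i hi j hj hne).le.trans (Finset.le_sup' (fun p => β p.1 p.2) hij)
  have hSS'strict : S ⊂ S' := hSS'.ssubset_of_ne (by rintro rfl; omega)
  refine Finset.lt_of_ssubset_of_insert_lt (fun T hTS' x hxS' hxT => ?_) hSS'strict
  have hTS'strict : T ⊂ S' := (Finset.ssubset_iff_of_subset hTS').2 ⟨x, hxS', hxT⟩
  exact quboObj_insert_lt hxT (hS'card ▸ Finset.card_lt_card hTS'strict) (hα x (hS'X hxS'))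
    (fun i hi => hβM i (hS'X (hTS' hi)) x (hS'X hxS') (ne_of_mem_of_not_mem hi hxT)) hM hB

/-- 'Too few nodes' half of the constraint-strength guarantee: if
`B > 2·K·max_{i ≠ j} β(i,j)`, then extending any selection of `K − l` nodes
(`1 ≤ l ≤ K`) to any `K`-node superselection inside `X` strictly decreases the
QUBO objective. -/
theorem qubo_too_few_nodes {ι : Type*} [LinearOrder ι] (X : Finset ι)
    (n : ℕ) (hXcard : X.card = n) (hn : 2 ≤ n)
    (K : ℕ) (hK : 1 ≤ K) (hKn : K < n)
    (α : ι → ℝ) (hα : ∀ i ∈ X, α i < 0)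
    (β : ι → ι → ℝ) (hβsymm : ∀ i j, β i j = β j i)
    (hβpos : ∀ i ∈ X, ∀ j ∈ X, i ≠ j → 0 < β i j)
    (hXoff : X.offDiag.Nonempty)
    (B : ℝ) (hB : B > 2 * (K : ℝ) * X.offDiag.sup' hXoff (fun p => β p.1 p.2)) :
    ∀ S ⊆ X, ∀ l : ℕ, 1 ≤ l → l ≤ K → S.card = K - l →
      ∀ S', S ⊆ S' → S' ⊆ X → S'.card = K →
        quboObj α β B (K : ℝ) S' < quboObj α β B (K : ℝ) S :=
  qubo_too_few_nodes_general X K α hα β hβpos hXoff B hB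
end
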